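/- Let x_0 ∈ ℝ^n, let x* be the unique point with A x* = b and x* ∈ x_0 + R(Aᵀ), let r_0 := g − C x_0, and suppose x_k is the unique minimizer of ‖x − x*‖² over x_0 + K_k(C,r_0). If r_k := g − C x_k ≠ 0 (equivalently P(x_k) ≠ x_k), then r_k ∉ K_k(C,r_0); in particular, the component of r_k orthogonal to K_k(C,r_0) is nonzero. -/

import Mathlib

/-!
The solution `x*` is a common fixed point of the projections `P_j`, and `P_j y - x*` is the
orthogonal projection of `y - x*` onto `N(A_j)`. Hence `P x - x* = T (x - x*)`, so `P` does not
increase the distance to `x*`, and `P x = x + (g - C x)`. If `r_k ∈ K_k(C, r_0)`, then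
`P x_k = x_k + r_k` is a point of `x_0 + K_k(C, r_0)` at least as close to `x*` as `x_k`; by
uniqueness of the minimizer `r_k = 0`.
-/

open scoped RealInnerProductSpace

noncomputable section

abbrev Euc (n : ℕ) := EuclideanSpace ℝ (Fin n)

/-- Intermediate Kaczmarz chain: `chainK Pj x j` is `y_j` with `y_0 = x`, `y_{j+1} = P_{j+1}(y_j)`. -/
def chainK {n p : ℕ} (Pj : Fin p → Euc n → Euc n) (x : Euc n) : ℕ → Euc n
  | 0 => x
  | j + 1 => if h : j < p then Pj ⟨j, h⟩ (chainK Pj x j) else chainK Pj x j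

/-- The block Kaczmarz operator `P = P_p ∘ ⋯ ∘ P_1`. -/
def kacz {n p : ℕ} (Pj : Fin p → Euc n → Euc n) (x : Euc n) : Euc n := chainK Pj x p

/-- `f` sends each point to the (unique) nearest point of `S`. -/
def IsNearestPointMap {n : ℕ} (S : Set (Euc n)) (f : Euc n → Euc n) : Prop :=
  ∀ x, f x ∈ S ∧ ∀ y ∈ S, dist x (f x) ≤ dist x y

/-- The stacked (full) matrix `A` with blocks `A_j`. -/
def fullA {n p : ℕ} (m : Fin p → ℕ)
    (A : ∀ j : Fin p, Euc n →ₗ[ℝ] Euc (m j)) :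
    Euc n →ₗ[ℝ] PiLp 2 (fun j => Euc (m j)) :=
  (WithLp.linearEquiv 2 ℝ (∀ j, Euc (m j))).symm.toLinearMap ∘ₗ LinearMap.pi A

/-- The range of `Aᵀ` for the stacked matrix. -/
def RAT {n p : ℕ} (m : Fin p → ℕ)
    (A : ∀ j : Fin p, Euc n →ₗ[ℝ] Euc (m j)) : Submodule ℝ (Euc n) :=
  LinearMap.range (LinearMap.adjoint (fullA m A))

/-- Orthogonal projection onto a subspace, as an endomorphism. -/
def projSub {n : ℕ} (K : Submodule ℝ (Euc n)) : Euc n →ₗ[ℝ] Euc n :=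
  K.subtype ∘ₗ (Submodule.orthogonalProjectionOnto K).toLinearMap

/-- `Tchain m A j = Q_j ∘ ⋯ ∘ Q_1`, with `Q_i` the orthogonal projection onto `N(A_i)`. -/
def Tchain {n p : ℕ} (m : Fin p → ℕ)
    (A : ∀ j : Fin p, Euc n →ₗ[ℝ] Euc (m j)) :
    ℕ → (Euc n →ₗ[ℝ] Euc n)
  | 0 => LinearMap.id
  | j + 1 => if h : j < p then projSub (LinearMap.ker (A ⟨j, h⟩)) ∘ₗ Tchain m A j
             else Tchain m A j

/-- `T = Q_p ∘ ⋯ ∘ Q_1`. -/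
def Tmap {n p : ℕ} (m : Fin p → ℕ)
    (A : ∀ j : Fin p, Euc n →ₗ[ℝ] Euc (m j)) : Euc n →ₗ[ℝ] Euc n :=
  Tchain m A p

/-- `C = I - T`. -/
def Cmap {n p : ℕ} (m : Fin p → ℕ)
    (A : ∀ j : Fin p, Euc n →ₗ[ℝ] Euc (m j)) : Euc n →ₗ[ℝ] Euc n :=
  LinearMap.id - Tmap m A

/-- The Krylov space `K_k(C, r) = span(r, Cr, …, C^{k-1} r)`. -/
def krylov {n : ℕ} (C : Euc n →ₗ[ℝ] Euc n) (r : Euc n) (k : ℕ) : Submodule ℝ (Euc n) :=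
  Submodule.span ℝ {v | ∃ i < k, v = (C ^ i) r}

/-- `z` is the unique minimizer of `‖x - xs‖²` over `S`. -/
def IsUniqueMinimizer {n : ℕ} (xs : Euc n) (S : Set (Euc n)) (z : Euc n) : Prop :=
  z ∈ S ∧ ∀ y ∈ S, y ≠ z → ‖z - xs‖ ^ 2 < ‖y - xs‖ ^ 2

/-- The affine Krylov space `x₀ + K_k(C, r)` as a set. -/
def affKrylov {n : ℕ} (x0 : Euc n) (C : Euc n →ₗ[ℝ] Euc n) (r : Euc n) (k : ℕ) :
    Set (Euc n) :=
  (fun v => x0 + v) '' (krylov C r k : Set (Euc n))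

open Submodule

theorem projSub_apply {n : ℕ} (K : Submodule ℝ (Euc n)) (v : Euc n) :
    projSub K v = K.starProjection v :=
  rfl

theorem IsNearestPointMap.sub_eq_starProjection {n m : ℕ} {A : Euc n →ₗ[ℝ] Euc m} {b : Euc m}
    {f : Euc n → Euc n} (hf : IsNearestPointMap {z | A z = b} f) {c : Euc n} (hc : A c = b)
    (x : Euc n) : f x - c = (LinearMap.ker A).starProjection (x - c) := by
  have hfx : A (f x) = b := (hf x).1
  have hmem : f x - c ∈ LinearMap.ker A := by simp [hfx, hc]
  have hinf : ‖x - c - (f x - c)‖ = ⨅ v : LinearMap.ker A, ‖x - c - (v : Euc n)‖ := by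
    refine le_antisymm (le_ciInf fun v => ?_) ?_
    · have hv : A (c + v) = b := by simp [hc]
      simpa [dist_eq_norm, sub_sub] using (hf x).2 _ hv
    · exact ciInf_le ⟨0, by rintro _ ⟨v, rfl⟩; positivity⟩ (⟨_, hmem⟩ : LinearMap.ker A)
  exact (eq_starProjection_of_mem_of_inner_eq_zero hmem
    ((norm_eq_iInf_iff_real_inner_eq_zero _ hmem).1 hinf)).symm

section Kaczmarz

variable {n p : ℕ} {msz : Fin p → ℕ} {A : ∀ j : Fin p, Euc n →ₗ[ℝ] Euc (msz j)}
  {b : ∀ j : Fin p, Euc (msz j)} {Pj : Fin p → Euc n → Euc n} {xs : Euc n}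

theorem chainK_sub_eq_Tchain
    (hPj : ∀ j : Fin p, IsNearestPointMap {z : Euc n | A j z = b j} (Pj j))
    (hxs : ∀ j, A j xs = b j) (x : Euc n) (j : ℕ) :
    chainK Pj x j - xs = Tchain msz A j (x - xs) := by
  induction j with
  | zero => rfl
  | succ j ih =>
    by_cases h : j < p
    · simp only [chainK, Tchain, dif_pos h, LinearMap.comp_apply, ← ih, projSub_apply]
      exact (hPj _).sub_eq_starProjection (hxs _) _
    · simpa only [chainK, Tchain, dif_neg h] using ih

theorem kacz_sub_eq_Tmap
    (hPj : ∀ j : Fin p, IsNearestPointMap {z : Euc n | A j z = b j} (Pj j))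
    (hxs : ∀ j, A j xs = b j) (x : Euc n) :
    kacz Pj x - xs = Tmap msz A (x - xs) :=
  chainK_sub_eq_Tchain hPj hxs x p

theorem norm_Tchain_apply_le (v : Euc n) (j : ℕ) : ‖Tchain msz A j v‖ ≤ ‖v‖ := by
  induction j with
  | zero => rfl
  | succ j ih =>
    by_cases h : j < p
    · simp only [Tchain, dif_pos h, LinearMap.comp_apply, projSub_apply]
      exact (norm_starProjection_apply_le _ _).trans ih
    · simpa only [Tchain, dif_neg h] using ih

theorem norm_kacz_sub_le
    (hPj : ∀ j : Fin p, IsNearestPointMap {z : Euc n | A j z = b j} (Pj j))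
    (hxs : ∀ j, A j xs = b j) (x : Euc n) :
    ‖kacz Pj x - xs‖ ≤ ‖x - xs‖ := by
  rw [kacz_sub_eq_Tmap hPj hxs]
  exact norm_Tchain_apply_le _ _

theorem kacz_eq_add_residual
    (hPj : ∀ j : Fin p, IsNearestPointMap {z : Euc n | A j z = b j} (Pj j))
    (hxs : ∀ j, A j xs = b j) (x : Euc n) :
    kacz Pj x = x + (kacz Pj 0 - Cmap msz A x) := by
  have hx := kacz_sub_eq_Tmap hPj hxs x
  have h0 := kacz_sub_eq_Tmap hPj hxs 0
  simp only [map_sub, map_zero] at hx h0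
  simp only [Cmap, LinearMap.sub_apply, LinearMap.id_apply]
  rw [sub_eq_iff_eq_add] at hx h0
  rw [hx, h0]
  abel

end Kaczmarz

theorem add_mem_affKrylov {n : ℕ} {x0 r z v : Euc n} {C : Euc n →ₗ[ℝ] Euc n} {k : ℕ}
    (hz : z ∈ affKrylov x0 C r k) (hv : v ∈ krylov C r k) : z + v ∈ affKrylov x0 C r k := by
  obtain ⟨w, hw, rfl⟩ := hz
  exact ⟨w + v, add_mem hw hv, (add_assoc _ _ _).symm⟩

theorem IsUniqueMinimizer.eq_of_norm_le {n : ℕ} {xs z y : Euc n} {S : Set (Euc n)}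
    (hz : IsUniqueMinimizer xs S z) (hy : y ∈ S) (hle : ‖y - xs‖ ≤ ‖z - xs‖) : y = z := by
  by_contra hne
  have := hz.2 y hy hne
  nlinarith [norm_nonneg (y - xs)]

theorem stmt12_general
    {n p : ℕ} (msz : Fin p → ℕ)
    (A : ∀ j : Fin p, Euc n →ₗ[ℝ] Euc (msz j))
    (b : ∀ j : Fin p, Euc (msz j))
    (Pj : Fin p → Euc n → Euc n)
    (hPj : ∀ j : Fin p, IsNearestPointMap {z : Euc n | A j z = b j} (Pj j))
    (x0 xs : Euc n) (hxs : ∀ j, A j xs = b j)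
    (k : ℕ) (xk : Euc n)
    (hmin : IsUniqueMinimizer xs
      (affKrylov x0 (Cmap msz A) (kacz Pj (0 : Euc n) - Cmap msz A x0) k) xk)
    (rk : Euc n) (hrk : rk = kacz Pj (0 : Euc n) - Cmap msz A xk) (hrk0 : rk ≠ 0) :
    rk ∉ krylov (Cmap msz A) (kacz Pj (0 : Euc n) - Cmap msz A x0) k ∧
    rk - (Submodule.orthogonalProjectionOnto
        (krylov (Cmap msz A) (kacz Pj (0 : Euc n) - Cmap msz A x0) k) rk : Euc n) ≠ 0 := by
  have hP : kacz Pj xk = xk + rk := hrk ▸ kacz_eq_add_residual hPj hxs xk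
  have hnotmem : rk ∉ krylov (Cmap msz A) (kacz Pj 0 - Cmap msz A x0) k := fun hmem =>
    hrk0 <| add_eq_left.mp <| hmin.eq_of_norm_le (add_mem_affKrylov hmin.1 hmem)
      (hP ▸ norm_kacz_sub_le hPj hxs xk)
  refine ⟨hnotmem, sub_ne_zero.mpr fun h => hnotmem ?_⟩
  rw [h]
  exact coe_mem _

theorem stmt12
    {n p : ℕ} (msz : Fin p → ℕ)
    (A : ∀ j : Fin p, Euc n →ₗ[ℝ] Euc (msz j))
    (b : ∀ j : Fin p, Euc (msz j))
    (hcons : ∃ z : Euc n, ∀ j, A j z = b j)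
    (Pj : Fin p → Euc n → Euc n)
    (hPj : ∀ j : Fin p, IsNearestPointMap {z : Euc n | A j z = b j} (Pj j))
    (x0 xs : Euc n) (hxs : ∀ j, A j xs = b j) (hxs' : xs - x0 ∈ RAT msz A)
    (k : ℕ) (xk : Euc n)
    (hmin : IsUniqueMinimizer xs
      (affKrylov x0 (Cmap msz A) (kacz Pj (0 : Euc n) - Cmap msz A x0) k) xk)
    (rk : Euc n) (hrk : rk = kacz Pj (0 : Euc n) - Cmap msz A xk) (hrk0 : rk ≠ 0) :
    rk ∉ krylov (Cmap msz A) (kacz Pj (0 : Euc n) - Cmap msz A x0) k ∧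
    rk - (Submodule.orthogonalProjectionOnto
        (krylov (Cmap msz A) (kacz Pj (0 : Euc n) - Cmap msz A x0) k) rk : Euc n) ≠ 0 :=
  stmt12_general msz A b Pj hPj x0 xs hxs k xk hmin rk hrk hrk0

end
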